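/- (General finite α-embedding theorem for MV-algebras) Let α be an infinite cardinal, let M be an MV-algebra with |M| ≤ α, fixed by an injective map i_M : M → α, and let I be the set of all finite subsets of α. Suppose that for every X ∈ I there exist an MV-algebra A_X and a partial-subalgebra embedding ρ_X : i_M^{-1}(X) → A_X. Then there exists an α-regular ultrafilter U on I, containing every set U(X) = {Y ∈ I : X ⊆ Y} and not depending on M, such that M embeds (as an injective MV-homomorphism) into the ultraproduct (∏_{X∈I} A_X)/U. -/

import Mathlib

/-- An MV-algebra structure on a type `A`. -/
structure MVStr (A : Type*) where
  oplus : A → A → A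
  neg : A → A
  zero : A
  oplus_comm : ∀ x y, oplus x y = oplus y x
  oplus_assoc : ∀ x y z, oplus x (oplus y z) = oplus (oplus x y) z
  oplus_zero : ∀ x, oplus x zero = x
  neg_neg : ∀ x, neg (neg x) = x
  oplus_one : ∀ x, oplus x (neg zero) = neg zero
  mv6 : ∀ x y, oplus (neg (oplus (neg x) y)) y = oplus (neg (oplus (neg y) x)) x

namespace MVStr

variable {A : Type*}

/-- The top element `1 := ¬0`. -/
def one (s : MVStr A) : A := s.neg s.zero

/-- The MV-order: `x ≤ y` iff `¬x ⊕ y = 1`. -/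
def le (s : MVStr A) (x y : A) : Prop := s.oplus (s.neg x) y = s.one

/-- An MV-algebra is linearly ordered if the MV-order is total. -/
def Linear (s : MVStr A) : Prop := ∀ x y, s.le x y ∨ s.le y x

end MVStr

/-- `f : A → B` is an MV-homomorphism. -/
def IsMVHom {A B : Type*} (s : MVStr A) (t : MVStr B) (f : A → B) : Prop :=
  (∀ x y, f (s.oplus x y) = t.oplus (f x) (f y)) ∧
  (∀ x, f (s.neg x) = t.neg (f x)) ∧
  f s.zero = t.zero

/-- A partial-subalgebra embedding of the restriction of `s` to `X` into `t`. -/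
def IsPartialMVEmbedding {A B : Type*} (s : MVStr A) (t : MVStr B) (X : Set A)
    (f : A → B) : Prop :=
  Set.InjOn f X ∧
  (s.zero ∈ X → f s.zero = t.zero) ∧
  (∀ x ∈ X, s.neg x ∈ X → f (s.neg x) = t.neg (f x)) ∧
  (∀ x ∈ X, ∀ y ∈ X, s.oplus x y ∈ X → f (s.oplus x y) = t.oplus (f x) (f y))

/-- The direct product of MV-algebras, with componentwise operations. -/
def piMV {I : Type*} {A : I → Type*} (s : ∀ i, MVStr (A i)) : MVStr (∀ i, A i) where
  oplus x y := fun i => (s i).oplus (x i) (y i)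
  neg x := fun i => (s i).neg (x i)
  zero := fun i => (s i).zero
  oplus_comm x y := funext fun i => (s i).oplus_comm _ _
  oplus_assoc x y z := funext fun i => (s i).oplus_assoc _ _ _
  oplus_zero x := funext fun i => (s i).oplus_zero _
  neg_neg x := funext fun i => (s i).neg_neg _
  oplus_one x := funext fun i => (s i).oplus_one _
  mv6 x y := funext fun i => (s i).mv6 _ _

/-- The setoid identifying two elements of a direct product when they agree on a
set belonging to the ultrafilter `U`. -/
def mvSetoid {I : Type*} (A : I → Type*) (U : Ultrafilter I) : Setoid (∀ i, A i) where
  r x y := {i | x i = y i} ∈ (U : Filter I)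
  iseqv := by
    refine ⟨fun x => ?_, fun {x y} h => ?_, fun {x y z} h1 h2 => ?_⟩
    · have : {i | x i = x i} = Set.univ := Set.eq_univ_of_forall fun i => rfl
      rw [this]; exact Filter.univ_mem
    · have : {i | x i = y i} ⊆ {i | y i = x i} := fun i hi => (hi : x i = y i).symm
      exact Filter.mem_of_superset h this
    · refine Filter.mem_of_superset (Filter.inter_mem h1 h2) ?_
      rintro i ⟨hi1, hi2⟩
      exact (hi1 : x i = y i).trans hi2

/-- The carrier of the ultraproduct of the family `A` modulo the ultrafilter `U`. -/
def MVUltra {I : Type*} (A : I → Type*) (U : Ultrafilter I) : Type _ :=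
  Quotient (mvSetoid A U)

/-- The ultraproduct of a family of MV-algebras modulo an ultrafilter `U`. -/
def ultraMV {I : Type*} {A : I → Type*} (s : ∀ i, MVStr (A i)) (U : Ultrafilter I) :
    MVStr (MVUltra A U) where
  oplus := Quotient.map₂ (fun x y => fun i => (s i).oplus (x i) (y i)) (by
    intro a c hac b d hbd
    refine Filter.mem_of_superset (Filter.inter_mem hac hbd) ?_
    rintro i ⟨hi1, hi2⟩
    show (s i).oplus (a i) (b i) = (s i).oplus (c i) (d i)
    rw [show a i = c i from hi1, show b i = d i from hi2])
  neg := Quotient.map (fun x => fun i => (s i).neg (x i)) (by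
    intro a b hab
    refine Filter.mem_of_superset hab ?_
    intro i hi
    show (s i).neg (a i) = (s i).neg (b i)
    rw [show a i = b i from hi])
  zero := Quotient.mk (mvSetoid A U) (fun i => (s i).zero)
  oplus_comm := by
    intro x y
    refine Quotient.inductionOn₂ x y ?_
    intro a b
    simp only [Quotient.map_mk, Quotient.map₂_mk, Quotient.map, Quotient.map₂]
    exact congrArg _ (funext fun i => (s i).oplus_comm _ _)
  oplus_assoc := by
    intro x y z
    refine Quotient.inductionOn₃ x y z ?_
    intro a b c
    simp only [Quotient.map_mk, Quotient.map₂_mk, Quotient.map, Quotient.map₂]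
    exact congrArg _ (funext fun i => (s i).oplus_assoc _ _ _)
  oplus_zero := by
    intro x
    refine Quotient.inductionOn x ?_
    intro a
    simp only [Quotient.map_mk, Quotient.map₂_mk, Quotient.map, Quotient.map₂]
    exact congrArg _ (funext fun i => (s i).oplus_zero _)
  neg_neg := by
    intro x
    refine Quotient.inductionOn x ?_
    intro a
    simp only [Quotient.map_mk, Quotient.map₂_mk, Quotient.map, Quotient.map₂]
    exact congrArg _ (funext fun i => (s i).neg_neg _)
  oplus_one := by
    intro x
    refine Quotient.inductionOn x ?_
    intro a
    simp only [Quotient.map_mk, Quotient.map₂_mk, Quotient.map, Quotient.map₂]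
    exact congrArg _ (funext fun i => (s i).oplus_one _)
  mv6 := by
    intro x y
    refine Quotient.inductionOn₂ x y ?_
    intro a b
    simp only [Quotient.map_mk, Quotient.map₂_mk, Quotient.map, Quotient.map₂]
    exact congrArg _ (funext fun i => (s i).mv6 _ _)

/-- The MV-algebra structure on a suitable subset of a linearly ordered field,
with `x ⊕ y = min (x + y) 1` and `¬x = 1 - x`. -/
def subMV {K : Type*} [Field K] [LinearOrder K] [IsStrictOrderedRing K] (S : Set K)
    (hsub : ∀ x ∈ S, 0 ≤ x ∧ x ≤ 1)
    (h0 : (0 : K) ∈ S)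
    (hneg : ∀ x ∈ S, 1 - x ∈ S)
    (hop : ∀ x ∈ S, ∀ y ∈ S, min (x + y) 1 ∈ S) : MVStr S where
  oplus x y := ⟨min (x.1 + y.1) 1, hop _ x.2 _ y.2⟩
  neg x := ⟨1 - x.1, hneg _ x.2⟩
  zero := ⟨0, h0⟩
  oplus_comm x y := Subtype.ext (by dsimp only; rw [add_comm])
  oplus_assoc x y z := Subtype.ext (by
    obtain ⟨hx0, hx1⟩ := hsub _ x.2
    obtain ⟨hy0, hy1⟩ := hsub _ y.2
    obtain ⟨hz0, hz1⟩ := hsub _ z.2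
    dsimp only
    simp only [min_def]
    split_ifs <;> linarith)
  oplus_zero x := Subtype.ext (by
    obtain ⟨hx0, hx1⟩ := hsub _ x.2
    dsimp only
    rw [add_zero, min_eq_left hx1])
  neg_neg x := Subtype.ext (by dsimp only; ring)
  oplus_one x := Subtype.ext (by
    obtain ⟨hx0, hx1⟩ := hsub _ x.2
    dsimp only
    rw [sub_zero, min_eq_right (by linarith)])
  mv6 x y := Subtype.ext (by
    obtain ⟨hx0, hx1⟩ := hsub _ x.2
    obtain ⟨hy0, hy1⟩ := hsub _ y.2
    dsimp only
    simp only [min_def]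
    split_ifs <;> linarith)

/-- The standard MV-algebra on the real interval `[0,1]`. -/
noncomputable def stdMV : MVStr (Set.Icc (0 : ℝ) 1) :=
  subMV _ (fun _ hx => ⟨hx.1, hx.2⟩) ⟨le_refl 0, zero_le_one⟩
    (fun x hx => ⟨by linarith [hx.2], by linarith [hx.1]⟩)
    (fun x hx y hy => ⟨le_min (add_nonneg hx.1 hy.1) zero_le_one, min_le_right _ _⟩)

/-- The rational standard MV-algebra on `ℚ ∩ [0,1]`. -/
def ratMV : MVStr (Set.Icc (0 : ℚ) 1) :=
  subMV _ (fun _ hx => ⟨hx.1, hx.2⟩) ⟨le_refl 0, zero_le_one⟩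
    (fun x hx => ⟨by linarith [hx.2], by linarith [hx.1]⟩)
    (fun x hx y hy => ⟨le_min (add_nonneg hx.1 hy.1) zero_le_one, min_le_right _ _⟩)

/-- The carrier `{0, 1/k, 2/k, …, 1}` of the finite MV-chain `Ł_k`. -/
def Lset (k : ℕ) : Set ℚ := {q | ∃ i : ℕ, i ≤ k ∧ q = (i : ℚ) / k}

/-- The finite MV-chain `Ł_k` on `{0, 1/k, 2/k, …, 1}` (for `k ≥ 1`). -/
def LMV (k : ℕ) (hk : 1 ≤ k) : MVStr (Lset k) := by
  have hk0 : (0 : ℚ) < (k : ℚ) := by exact_mod_cast hk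
  refine subMV _ ?_ ?_ ?_ ?_
  · rintro x ⟨i, hik, rfl⟩
    exact ⟨div_nonneg (by positivity) hk0.le, (div_le_one hk0).2 (by exact_mod_cast hik)⟩
  · exact ⟨0, Nat.zero_le _, by simp⟩
  · rintro x ⟨i, hik, rfl⟩
    refine ⟨k - i, Nat.sub_le _ _, ?_⟩
    rw [Nat.cast_sub hik]
    field_simp
  · rintro x ⟨i, hik, rfl⟩ y ⟨j, hjk, rfl⟩
    refine ⟨min (i + j) k, min_le_right _ _, ?_⟩
    rw [← add_div]
    rcases le_total (i + j) k with h | h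
    · rw [min_eq_left h, min_eq_left ((div_le_one hk0).2 (by exact_mod_cast h))]
      push_cast
      ring
    · rw [min_eq_right h, min_eq_right ((one_le_div hk0).2 (by exact_mod_cast h))]
      field_simp

/-- `U` is an `α`-regular (ultra)filter. -/
def IsRegularUltrafilter {I : Type*} (α : Cardinal) (U : Ultrafilter I) : Prop :=
  ∃ E : Set (Set I), (∀ e ∈ E, e ∈ (U : Filter I)) ∧ Cardinal.mk E = α ∧
    ∀ i : I, {e : E | i ∈ (e : Set I)}.Finite

universe u

/-!
Take any ultrafilter `U` on the finite subsets of `A` refining the filter `atTop` generated by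
the cones `{Y | X ⊆ Y}`. For `a : A` the cones `{Y | a ∈ Y}` are pairwise distinct members
of `U`, and a finite `Y` lies in only finitely many of them, so `U` is `#A`-regular. Given
partial embeddings `ρ_X`, send `m` to the class of `(ρ_X m)_X`: any finitely many elements
of `M` eventually lie in the domain `iM⁻¹(X)` of `ρ_X`, where `ρ_X` respects the operations
on them and separates them, so the induced map is an injective homomorphism.
-/

open Filter

namespace MVUltra

variable {I : Type*} {A : I → Type*}

def mk (U : Ultrafilter I) (a : ∀ i, A i) : MVUltra A U := Quotient.mk (mvSetoid A U) a

variable {U : Ultrafilter I}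

theorem mk_eq_mk_iff {a b : ∀ i, A i} : mk U a = mk U b ↔ ∀ᶠ i in (U : Filter I), a i = b i :=
  Quotient.eq

variable (s : ∀ i, MVStr (A i))

theorem oplus_mk (a b : ∀ i, A i) :
    (ultraMV s U).oplus (mk U a) (mk U b) = mk U fun i => (s i).oplus (a i) (b i) := rfl

theorem neg_mk (a : ∀ i, A i) : (ultraMV s U).neg (mk U a) = mk U fun i => (s i).neg (a i) :=
  rfl

theorem zero_eq_mk : (ultraMV s U).zero = mk U fun i => (s i).zero := rfl

end MVUltra

section Los

variable {I M : Type*} {A : I → Type*} {U : Ultrafilter I}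
  (s : MVStr M) (t : ∀ i, MVStr (A i)) (ρ : ∀ i, M → A i)

theorem isMVHom_ultraMV_mk_of_eventually
    (hoplus : ∀ x y, ∀ᶠ i in (U : Filter I), ρ i (s.oplus x y) = (t i).oplus (ρ i x) (ρ i y))
    (hneg : ∀ x, ∀ᶠ i in (U : Filter I), ρ i (s.neg x) = (t i).neg (ρ i x))
    (hzero : ∀ᶠ i in (U : Filter I), ρ i s.zero = (t i).zero) :
    IsMVHom s (ultraMV t U) fun m => MVUltra.mk U fun i => ρ i m :=
  ⟨fun x y => by rw [MVUltra.oplus_mk]; exact MVUltra.mk_eq_mk_iff.2 (hoplus x y),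
    fun x => by rw [MVUltra.neg_mk]; exact MVUltra.mk_eq_mk_iff.2 (hneg x),
    by rw [MVUltra.zero_eq_mk]; exact MVUltra.mk_eq_mk_iff.2 hzero⟩

theorem injective_ultraMV_mk_of_eventually
    (hsep : ∀ x y, x ≠ y → ∀ᶠ i in (U : Filter I), ρ i x ≠ ρ i y) :
    Function.Injective fun m => MVUltra.mk (A := A) U fun i => ρ i m := by
  intro x y hxy
  by_contra hne
  obtain ⟨i, heq, hne⟩ := (MVUltra.mk_eq_mk_iff.1 hxy).and (hsep x y hne) |>.exists
  exact hne heq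

end Los

section FiniteSubsets

variable {A : Type*} {U : Ultrafilter (Finset A)}

theorem eventually_mem_of_le_atTop (hU : (U : Filter (Finset A)) ≤ atTop) (a : A) :
    ∀ᶠ Y in (U : Filter (Finset A)), a ∈ Y :=
  hU <| (eventually_ge_atTop {a}).mono fun _ h => Finset.singleton_subset_iff.1 h

theorem isRegularUltrafilter_of_le_atTop (hU : (U : Filter (Finset A)) ≤ atTop) :
    IsRegularUltrafilter (Cardinal.mk A) U := by
  set cone : A → Set (Finset A) := fun a => {Y | a ∈ Y}
  have hcone : Function.Injective cone := fun a b hab => by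
    have h : {a} ∈ cone b := hab ▸ Finset.mem_singleton_self a
    exact (Finset.mem_singleton.1 h).symm
  refine ⟨Set.range cone, ?_, Cardinal.mk_range_eq _ hcone, fun Y => ?_⟩
  · rintro _ ⟨a, rfl⟩
    exact eventually_mem_of_le_atTop hU a
  · refine ((Y.finite_toSet).image fun a => (⟨cone a, a, rfl⟩ : Set.range cone)).subset ?_
    rintro ⟨_, a, rfl⟩ ha
    exact ⟨a, ha, rfl⟩

theorem exists_injective_isMVHom_of_le_atTop (hU : (U : Filter (Finset A)) ≤ atTop)
    {M : Type*} (s : MVStr M) (iM : M → A) {B : Finset A → Type*} (t : ∀ X, MVStr (B X))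
    (hρ : ∀ X : Finset A, ∃ ρ : M → B X, IsPartialMVEmbedding s (t X) (iM ⁻¹' (↑X : Set A)) ρ) :
    ∃ g : M → MVUltra B U, IsMVHom s (ultraMV t U) g ∧ Function.Injective g := by
  choose ρ hinj hzero hneg hoplus using hρ
  have hdom (m : M) : ∀ᶠ X : Finset A in (U : Filter (Finset A)), m ∈ iM ⁻¹' (↑X : Set A) :=
    eventually_mem_of_le_atTop hU (iM m)
  refine ⟨_, isMVHom_ultraMV_mk_of_eventually s t ρ ?_ ?_ ?_,
    injective_ultraMV_mk_of_eventually ρ ?_⟩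
  · intro x y
    filter_upwards [hdom x, hdom y, hdom (s.oplus x y)] with X hx hy hxy
    exact hoplus X x hx y hy hxy
  · intro x
    filter_upwards [hdom x, hdom (s.neg x)] with X hx hnx
    exact hneg X x hx hnx
  · filter_upwards [hdom s.zero] with X h0
    exact hzero X h0
  · intro x y hne
    filter_upwards [hdom x, hdom y] with X hx hy
    exact fun h => hne (hinj X hx hy h)

end FiniteSubsets

theorem general_finite_alpha_embedding_general (A : Type u) :
    ∃ U : Ultrafilter (Finset A),
      (∀ X : Finset A, {Y : Finset A | X ⊆ Y} ∈ U) ∧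
      IsRegularUltrafilter (Cardinal.mk A) U ∧
      ∀ (M : Type u) (s : MVStr M) (iM : M → A), Function.Injective iM →
        ∀ (Afam : Finset A → Type u) (t : ∀ X, MVStr (Afam X)),
          (∀ X : Finset A, ∃ ρ : M → Afam X,
            IsPartialMVEmbedding s (t X) (iM ⁻¹' (↑X : Set A)) ρ) →
          ∃ g : M → MVUltra Afam U,
            IsMVHom s (ultraMV t U) g ∧ Function.Injective g := by
  have hU : (Ultrafilter.of (atTop : Filter (Finset A)) : Filter (Finset A)) ≤ atTop :=
    Ultrafilter.of_le _
  exact ⟨Ultrafilter.of atTop, fun X => hU (mem_atTop X), isRegularUltrafilter_of_le_atTop hU,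
    fun M s iM _ _ t hρ => exists_injective_isMVHom_of_le_atTop hU s iM t hρ⟩

/-- general finite `α`-embedding theorem for MV-algebras: there is an
`α`-regular ultrafilter `U` on the finite subsets of `α`, containing every
`U(X) = {Y : X ⊆ Y}` and not depending on the algebra, such that any MV-algebra `M`
of cardinality at most `α` (witnessed by an injection `iM : M → A`) all of whose
finite partial subalgebras `iM⁻¹(X)` partially embed into MV-algebras `A_X` embeds
into the ultraproduct `(∏_X A_X)/U`. -/
theorem general_finite_alpha_embedding (A : Type u) [Infinite A] :
    ∃ U : Ultrafilter (Finset A),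
      (∀ X : Finset A, {Y : Finset A | X ⊆ Y} ∈ U) ∧
      IsRegularUltrafilter (Cardinal.mk A) U ∧
      ∀ (M : Type u) (s : MVStr M) (iM : M → A), Function.Injective iM →
        ∀ (Afam : Finset A → Type u) (t : ∀ X, MVStr (Afam X)),
          (∀ X : Finset A, ∃ ρ : M → Afam X,
            IsPartialMVEmbedding s (t X) (iM ⁻¹' (↑X : Set A)) ρ) →
          ∃ g : M → MVUltra Afam U,
            IsMVHom s (ultraMV t U) g ∧ Function.Injective g :=
  general_finite_alpha_embedding_general A
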